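/- Let x, x_s ∈ R^{nN}, u = (u^1;...;u^N), u_s = (u_s^1;...;u_s^N) ∈ R^{mN}, Q̃ ⪰ 0 an nN×nN matrix, ρ^1,...,ρ^N > 0, U ≥ 0, and define the fair stage cost ℓ_fair(x,u) = ‖x - x_s‖²_{Q̃} + ∑_{i=1}^N ρ^i(‖u^i‖₁ - U/N)², and the standard stage cost ℓ(x,u) = ‖x - x_s‖²_{Q̃} + ∑_{i=1}^N m·ρ^i·‖u^i - u_s^i‖₂². If ∑_{i=1}^N ‖u^i‖₁ ≤ U, then ℓ_fair(x,u) ≤ ℓ(x,u) + ((N²+1)/N²)·(∑_{i=1}^N ρ^i)·U². -/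

import Mathlib

/-!
Both stage costs share the state term, and the input term of the standard cost is nonnegative,
so it suffices to bound the fairness penalty by `((N²+1)/N²)(∑ ρⁱ) U²`. Each load
`sⁱ = ‖uⁱ‖₁` lies in `[0, U]` by the allocation constraint, and for `s, t ≥ 0` one has
`(s - t)² ≤ s² + t²`; with `t = U/N` this gives `(sⁱ - U/N)² ≤ U² + U²/N²`.
-/

open Matrix

lemma sq_sub_le_sq_add_sq_of_le {s t U : ℝ} (hs : 0 ≤ s) (ht : 0 ≤ t) (hsU : s ≤ U) :
    (s - t) ^ 2 ≤ U ^ 2 + t ^ 2 := by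
  nlinarith [mul_nonneg hs ht]

lemma sum_mul_sq_sub_le {ι : Type*} [Fintype ι] {ρ s : ι → ℝ} {t U : ℝ}
    (hρ : ∀ i, 0 ≤ ρ i) (hs : ∀ i, 0 ≤ s i) (hsU : ∀ i, s i ≤ U) (ht : 0 ≤ t) :
    ∑ i, ρ i * (s i - t) ^ 2 ≤ (∑ i, ρ i) * (U ^ 2 + t ^ 2) := by
  rw [Finset.sum_mul]
  gcongr with i
  · exact hρ i
  · exact sq_sub_le_sq_add_sq_of_le (hs i) ht (hsU i)

theorem stmt_8_general (N n m : ℕ) (hN : 0 < N)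
    (Qt : Matrix (Fin N × Fin n) (Fin N × Fin n) ℝ)
    (x xs : Fin N × Fin n → ℝ)
    (u us : Fin N → Fin m → ℝ)
    (ρ : Fin N → ℝ) (hρ : ∀ i, 0 < ρ i)
    (U : ℝ) (hU : 0 ≤ U)
    (halloc : ∑ i, ∑ j, |u i j| ≤ U) :
    (x - xs) ⬝ᵥ Qt.mulVec (x - xs) + ∑ i, ρ i * ((∑ j, |u i j|) - U / N) ^ 2 ≤
      ((x - xs) ⬝ᵥ Qt.mulVec (x - xs) + ∑ i, (m : ℝ) * ρ i * ∑ j, (u i j - us i j) ^ 2) +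
        (((N : ℝ) ^ 2 + 1) / (N : ℝ) ^ 2) * (∑ i, ρ i) * U ^ 2 := by
  have hload_nonneg : ∀ i, 0 ≤ ∑ j, |u i j| := fun i => by positivity
  have hload_le : ∀ i, ∑ j, |u i j| ≤ U := fun i =>
    (Finset.single_le_sum (fun i _ => hload_nonneg i) (Finset.mem_univ i)).trans halloc
  have hpenalty := sum_mul_sq_sub_le (fun i => (hρ i).le) hload_nonneg hload_le
    (div_nonneg hU (Nat.cast_nonneg N))
  have hinput_nonneg : 0 ≤ ∑ i, (m : ℝ) * ρ i * ∑ j, (u i j - us i j) ^ 2 :=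
    Finset.sum_nonneg fun i _ => by have := (hρ i).le; positivity
  have hconst : (((N : ℝ) ^ 2 + 1) / (N : ℝ) ^ 2) * (∑ i, ρ i) * U ^ 2 =
      (∑ i, ρ i) * (U ^ 2 + (U / N) ^ 2) := by
    have : (N : ℝ) ≠ 0 := by exact_mod_cast hN.ne'
    field_simp
  linarith

/-- Lemma 3, Fair-MPC vs MPC part II: under the allocation constraint,
the fair stage cost is bounded by the standard stage cost plus `((N²+1)/N²)(∑ρ^i)U²`. -/
theorem stmt_8 (N n m : ℕ) (hN : 0 < N)
    (Qt : Matrix (Fin N × Fin n) (Fin N × Fin n) ℝ) (hQt : Qt.PosSemidef)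
    (x xs : Fin N × Fin n → ℝ)
    (u us : Fin N → Fin m → ℝ)
    (ρ : Fin N → ℝ) (hρ : ∀ i, 0 < ρ i)
    (U : ℝ) (hU : 0 ≤ U)
    (halloc : ∑ i, ∑ j, |u i j| ≤ U) :
    (x - xs) ⬝ᵥ Qt.mulVec (x - xs) + ∑ i, ρ i * ((∑ j, |u i j|) - U / N) ^ 2 ≤
      ((x - xs) ⬝ᵥ Qt.mulVec (x - xs) + ∑ i, (m : ℝ) * ρ i * ∑ j, (u i j - us i j) ^ 2) +
        (((N : ℝ) ^ 2 + 1) / (N : ℝ) ^ 2) * (∑ i, ρ i) * U ^ 2 :=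
  stmt_8_general N n m hN Qt x xs u us ρ hρ U hU halloc
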